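/- arXiv:math/0501271 — 3 statements merged into one kernel-verified Lean document; each statement's English description precedes it below -/
import Mathlib

section
/- (Additive Carlitz implication in Theorem 1.2.) If an arithmetical function f : ℤ⁺ → ℂ satisfies f(n)·τ(n) = 2·(f *_D ζ)(n) for all n ∈ ℤ⁺, then f is completely additive, i.e. f(mn) = f(m) + f(n) for all m, n ∈ ℤ⁺. -/
/-- The Dirichlet convolution of two arithmetical functions
`(f *_D g)(n) = ∑_{d ∣ n} f(d) g(n/d)`. -/
noncomputable def dirichletConv (f g : ℕ → ℂ) : ℕ → ℂ :=
  fun n => ∑ d ∈ n.divisors, f d * g (n / d)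

/-- The arithmetical function `ζ`, with `ζ(n) = 1` for all `n ∈ ℤ⁺`. -/
def zetaFn : ℕ → ℂ := fun _ => 1

/-- `τ = ζ *_D ζ`, the number-of-divisors function. -/
noncomputable def tauFn : ℕ → ℂ := dirichletConv zetaFn zetaFn

/-!
A completely additive `a` satisfies `a · τ = 2 (a *_D ζ)`, since pairing each divisor `d` of `n`
with `n / d` gives `2 ∑_{d ∣ n} a(d) = τ(n) a(n)`. The identity is linear in `f` and, read at `n`,
it says `(τ(n) - 2) f(n) = 2 ∑_{d ∣ n, d < n} f(d)`. As `τ(n) = 2` exactly when `n` is prime, a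
solution is determined by its values at primes, so `f` agrees with the completely additive
function `n ↦ ∑_p v_p(n) f(p)`.
-/

open Finset

namespace Nat

theorem card_properDivisors_eq_one_iff_prime {n : ℕ} : #n.properDivisors = 1 ↔ n.Prime := by
  refine ⟨fun h => ?_, fun hp => by rw [hp.properDivisors, card_singleton]⟩
  obtain ⟨a, ha⟩ := card_eq_one.mp h
  have hn : 1 < n := one_lt_of_mem_properDivisors (ha ▸ mem_singleton_self a)
  have h1 : 1 ∈ n.properDivisors := one_mem_properDivisors_iff_one_lt.mpr hn
  rw [ha, mem_singleton] at h1
  rw [← properDivisors_eq_singleton_one_iff_prime, ha, h1]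

end Nat

section CompletelyAdditive

variable {M : Type*} [AddCommMonoid M]

theorem two_nsmul_sum_divisors_of_completelyAdditive {a : ℕ → M}
    (ha : ∀ m n, m ≠ 0 → n ≠ 0 → a (m * n) = a m + a n) {n : ℕ} (hn : n ≠ 0) :
    2 • ∑ d ∈ n.divisors, a d = #n.divisors • a n := by
  have pair : ∀ d ∈ n.divisors, a d + a (n / d) = a n := fun d hd => by
    have hdn : d ∣ n := Nat.dvd_of_mem_divisors hd
    have hd0 : d ≠ 0 := (Nat.pos_of_mem_divisors hd).ne'
    rw [← ha d (n / d) hd0 ((Nat.div_ne_zero_iff_of_dvd hdn).mpr ⟨hn, hd0⟩),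
      Nat.mul_div_cancel' hdn]
  calc 2 • ∑ d ∈ n.divisors, a d
      = ∑ d ∈ n.divisors, a d + ∑ d ∈ n.divisors, a (n / d) := by
        rw [two_nsmul, Nat.sum_div_divisors]
    _ = ∑ d ∈ n.divisors, a n := by rw [← sum_add_distrib]; exact sum_congr rfl pair
    _ = #n.divisors • a n := sum_const _

noncomputable def completelyAdditiveExtension (f : ℕ → M) (n : ℕ) : M :=
  n.factorization.sum fun p k => k • f p

theorem completelyAdditiveExtension_mul (f : ℕ → M) {m n : ℕ} (hm : m ≠ 0) (hn : n ≠ 0) :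
    completelyAdditiveExtension f (m * n) =
      completelyAdditiveExtension f m + completelyAdditiveExtension f n := by
  rw [completelyAdditiveExtension, Nat.factorization_mul hm hn,
    Finsupp.sum_add_index' (fun p => zero_nsmul (f p)) (fun p k l => add_nsmul (f p) k l)]
  rfl

theorem completelyAdditiveExtension_prime (f : ℕ → M) {p : ℕ} (hp : p.Prime) :
    completelyAdditiveExtension f p = f p := by
  simp [completelyAdditiveExtension, hp.factorization, Finsupp.sum_single_index]

end CompletelyAdditive

theorem mul_card_divisors_eq_two_mul_sum_of_completelyAdditive {R : Type*} [CommSemiring R]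
    {a : ℕ → R}
    (ha : ∀ m n, m ≠ 0 → n ≠ 0 → a (m * n) = a m + a n) {n : ℕ} (hn : 0 < n) :
    a n * #n.divisors = 2 * ∑ d ∈ n.divisors, a d := by
  have := two_nsmul_sum_divisors_of_completelyAdditive ha hn.ne'
  rw [nsmul_eq_mul, nsmul_eq_mul] at this
  rw [mul_comm, ← this, Nat.cast_ofNat]

section DivisorIdentity

variable {R : Type*} [CommRing R] [IsDomain R] [CharZero R]

theorem eq_zero_of_mul_card_divisors_eq_of_eq_zero_on_primes {g : ℕ → R}
    (hg : ∀ n, 0 < n → g n * #n.divisors = 2 * ∑ d ∈ n.divisors, g d)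
    (hprime : ∀ p, p.Prime → g p = 0) {n : ℕ} (hn : 0 < n) : g n = 0 := by
  induction n using Nat.strong_induction_on with
  | _ n ih =>
    by_cases hp : n.Prime
    · exact hprime n hp
    have hproper : ∑ d ∈ n.properDivisors, g d = 0 := sum_eq_zero fun d hd =>
      ih d (Nat.mem_properDivisors.mp hd).2 (Nat.pos_of_mem_properDivisors hd)
    have hn' := hg n hn
    rw [← Nat.cons_self_properDivisors hn.ne', sum_cons, card_cons, hproper] at hn'
    have hcard : (#n.properDivisors : R) - 1 ≠ 0 :=
      sub_ne_zero.mpr (Nat.cast_ne_one.mpr (mt Nat.card_properDivisors_eq_one_iff_prime.mp hp))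
    refine (mul_eq_zero.mp ?_).resolve_right hcard
    push_cast at hn'
    linear_combination hn'

theorem eq_of_mul_card_divisors_eq_of_eq_on_primes {f g : ℕ → R}
    (hf : ∀ n, 0 < n → f n * #n.divisors = 2 * ∑ d ∈ n.divisors, f d)
    (hg : ∀ n, 0 < n → g n * #n.divisors = 2 * ∑ d ∈ n.divisors, g d)
    (hfg : ∀ p, p.Prime → f p = g p) {n : ℕ} (hn : 0 < n) : f n = g n := by
  refine sub_eq_zero.mp (eq_zero_of_mul_card_divisors_eq_of_eq_zero_on_primes (g := f - g)
    (fun n hn => ?_) (fun p hp => sub_eq_zero.mpr (hfg p hp)) hn)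
  simp only [Pi.sub_apply, sub_mul, sum_sub_distrib, hf n hn, hg n hn, mul_sub]

end DivisorIdentity

theorem tauFn_apply (n : ℕ) : tauFn n = #n.divisors := by
  simp [tauFn, dirichletConv, zetaFn]

theorem dirichletConv_zetaFn_apply (f : ℕ → ℂ) (n : ℕ) :
    dirichletConv f zetaFn n = ∑ d ∈ n.divisors, f d := by
  simp [dirichletConv, zetaFn]

/-- Additive Carlitz implication of Theorem 1.2: if `f · τ = 2 (f *_D ζ)`
then `f` is completely additive. -/
theorem stmt_3 (f : ℕ → ℂ)
    (h : ∀ n : ℕ, 0 < n → f n * tauFn n = 2 * dirichletConv f zetaFn n) :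
    ∀ m n : ℕ, 0 < m → 0 < n → f (m * n) = f m + f n := by
  set L := completelyAdditiveExtension f
  have hL_mul : ∀ m n, m ≠ 0 → n ≠ 0 → L (m * n) = L m + L n :=
    fun _ _ => completelyAdditiveExtension_mul f
  have hf_eq_L : ∀ n, 0 < n → f n = L n := fun n hn =>
    eq_of_mul_card_divisors_eq_of_eq_on_primes
      (fun k hk => by rw [← tauFn_apply, h k hk, dirichletConv_zetaFn_apply])
      (fun k hk => mul_card_divisors_eq_two_mul_sum_of_completelyAdditive hL_mul hk)
      (fun p hp => (completelyAdditiveExtension_prime f hp).symm) hn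
  intro m n hm hn
  rw [hf_eq_L m hm, hf_eq_L n hn, hf_eq_L (m * n) (Nat.mul_pos hm hn), hL_mul m n hm.ne' hn.ne']
end

section
/- (Equivalence (1) ⟺ (2) of Theorem 1.4.) Let F = Σ_{n≥0} a_n X^n ∈ ℂ[[X]] with a_1 ≠ 0. Then the arithmetical function η(F) : m ↦ ω(m)!·a_{ω(m)} is additive if and only if a_0 = 0 and a_n = a_1/(n−1)! for all n ∈ ℤ⁺. -/
/-
Write `b k = k! · a_k`, so that `η(F)(m) = b(ω(m))`. For coprime `m, n` one has
`ω(mn) = ω(m) + ω(n)`, and products of disjoint sets of primes realise every pair of values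
`(ω(m), ω(n))`. Hence `η(F)` is additive exactly when `b` is additive on `ℕ`, i.e. when
`b k = k · b 1 = k · a_1` for all `k`, which unwinds to `a_0 = 0` and `a_n = a_1 / (n - 1)!`.
-/

open PowerSeries

/-- `η(∑ aₙ Xⁿ)(m) = ω(m)! · a_{ω(m)}`, where `ω(m)` is the number of distinct
prime factors of `m`. -/
noncomputable def eta (F : PowerSeries ℂ) : ℕ → ℂ :=
  fun m => (Nat.factorial m.primeFactors.card : ℂ) * PowerSeries.coeff m.primeFactors.card F

/-- An arithmetical function is additive if `f(mn) = f(m) + f(n)` whenever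
`gcd(m,n) = 1`. -/
def IsAddArith (f : ℕ → ℂ) : Prop :=
  ∀ m n : ℕ, 0 < m → 0 < n → Nat.Coprime m n → f (m * n) = f m + f n

open Nat

lemma Nat.Coprime.card_primeFactors_mul {m n : ℕ} (h : m.Coprime n) :
    (m * n).primeFactors.card = m.primeFactors.card + n.primeFactors.card := by
  rw [h.primeFactors_mul, Finset.card_union_of_disjoint h.disjoint_primeFactors]

lemma Nat.exists_coprime_card_primeFactors_eq (j k : ℕ) :
    ∃ m n : ℕ, 0 < m ∧ 0 < n ∧ m.Coprime n ∧
      m.primeFactors.card = j ∧ n.primeFactors.card = k := by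
  obtain ⟨S, hS, hcard⟩ := Nat.infinite_setOfPred_prime.exists_subset_card_eq (j + k)
  obtain ⟨A, hAS, hA⟩ := Finset.exists_subset_card_eq (s := S) (n := j) (by omega)
  have hprime : ∀ p ∈ S, p.Prime := fun p hp => hS hp
  have hpos : ∀ T ⊆ S, 0 < ∏ p ∈ T, p := fun T hT =>
    Finset.prod_pos fun p hp => (hprime p (hT hp)).pos
  have hfac : ∀ T ⊆ S, (∏ p ∈ T, p).primeFactors = T := fun T hT =>
    Nat.primeFactors_prod fun p hp => hprime p (hT hp)
  refine ⟨∏ p ∈ A, p, ∏ p ∈ S \ A, p, hpos A hAS, hpos _ Finset.sdiff_subset, ?_, ?_, ?_⟩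
  · rw [← Nat.disjoint_primeFactors (hpos A hAS).ne' (hpos _ Finset.sdiff_subset).ne',
      hfac A hAS, hfac _ Finset.sdiff_subset]
    exact Finset.disjoint_sdiff
  · rw [hfac A hAS, hA]
  · rw [hfac _ Finset.sdiff_subset, Finset.card_sdiff_of_subset hAS]
    omega

lemma map_add_iff_eq_nsmul {M : Type*} [AddLeftCancelMonoid M] (g : ℕ → M) :
    (∀ j k, g (j + k) = g j + g k) ↔ ∀ n, g n = n • g 1 := by
  refine ⟨fun hadd n => ?_, fun h j k => by rw [h, h j, h k, add_nsmul]⟩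
  induction n with
  | zero => simpa using hadd 0 0
  | succ n ih => rw [hadd, ih, succ_nsmul]

lemma factorial_mul_eq_mul_iff {K : Type*} [Field K] [CharZero K] (a : ℕ → K) :
    (∀ n, (n ! : K) * a n = n * a 1) ↔ a 0 = 0 ∧ ∀ n, 0 < n → a n = a 1 / ((n - 1)! : K) := by
  have hsucc : ∀ n, ((n + 1)! : K) * a (n + 1) = (n + 1 : ℕ) * a 1 ↔
      a (n + 1) = a 1 / (n ! : K) := by
    intro n
    rw [eq_div_iff (Nat.cast_ne_zero.2 n.factorial_ne_zero), Nat.factorial_succ, Nat.cast_mul,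
      mul_assoc, mul_comm (a (n + 1))]
    exact mul_right_inj' (Nat.cast_ne_zero.2 n.succ_ne_zero)
  constructor
  · intro h
    refine ⟨by simpa using h 0, fun n hn => ?_⟩
    obtain ⟨n, rfl⟩ := Nat.exists_eq_add_of_lt hn
    simpa using (hsucc n).1 (h (n + 1))
  · rintro ⟨h0, h⟩ (_ | n)
    · simp [h0]
    · exact (hsucc n).2 (by simpa using h (n + 1) n.succ_pos)

lemma isAddArith_eta_iff (F : PowerSeries ℂ) :
    IsAddArith (eta F) ↔
      ∀ j k, ((j + k)! : ℂ) * coeff (j + k) F = (j ! : ℂ) * coeff j F + (k ! : ℂ) * coeff k F := by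
  constructor
  · intro H j k
    obtain ⟨m, n, hm, hn, hmn, rfl, rfl⟩ := Nat.exists_coprime_card_primeFactors_eq j k
    simpa only [eta, hmn.card_primeFactors_mul] using H m n hm hn hmn
  · intro H m n _ _ hmn
    simp only [eta, hmn.card_primeFactors_mul, H]

theorem stmt_8_general (F : PowerSeries ℂ) :
    IsAddArith (eta F) ↔
      (PowerSeries.coeff 0 F = 0 ∧ ∀ n : ℕ, 0 < n →
        PowerSeries.coeff n F = PowerSeries.coeff 1 F / (Nat.factorial (n - 1) : ℂ)) := by
  rw [isAddArith_eta_iff, map_add_iff_eq_nsmul (fun k => (k ! : ℂ) * coeff k F),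
    ← factorial_mul_eq_mul_iff (fun n => coeff n F)]
  simp only [nsmul_eq_mul, Nat.factorial_one, Nat.cast_one, one_mul]

/-- Equivalence (1) ⟺ (2) of Theorem 1.4: `η(F)` is additive iff `a₀ = 0` and
`aₙ = a₁/(n−1)!` for all `n ∈ ℤ⁺`. -/
theorem stmt_8 (F : PowerSeries ℂ) (h1 : PowerSeries.coeff 1 F ≠ 0) :
    IsAddArith (eta F) ↔
      (PowerSeries.coeff 0 F = 0 ∧ ∀ n : ℕ, 0 < n →
        PowerSeries.coeff n F = PowerSeries.coeff 1 F / (Nat.factorial (n - 1) : ℂ)) :=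
  stmt_8_general F
end

section
/- (Carlitz implication (5) ⟹ (1) of Theorem 2.3.) Let q ≥ 2 be a prime power and let F = Σ_{n≥0} a_n X^n ∈ ℂ[[X]] with a_1 ≠ 0. If Σ_{n≥0} G_n(q)·a_n X^n = F·F, i.e. G_n(q)·a_n = Σ_{k=0}^{n} a_k a_{n−k} for all n ≥ 0, where G_n(q) = Σ_{k=0}^{n} [n]_q!/([k]_q!·[n−k]_q!) are the Galois numbers, then a_n = a_1^n / [n]_q! for all n ≥ 0. -/
open PowerSeries

/-- The `q`-factorial `[n]_q! = ∏_{i=1}^{n} (1 + q + ⋯ + q^{i-1})`, with `[0]_q! = 1`. -/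
def qFactorial (q n : ℕ) : ℕ :=
  ∏ i ∈ Finset.range n, ∑ j ∈ Finset.range (i + 1), q ^ j

/-- The Galois number `Gₙ(q) = ∑_{k=0}^{n} [n]_q!/([k]_q!·[n−k]_q!)` (as a complex number). -/
noncomputable def galoisNumber (q n : ℕ) : ℂ :=
  ∑ k ∈ Finset.range (n + 1),
    (qFactorial q n : ℂ) / ((qFactorial q k : ℂ) * (qFactorial q (n - k) : ℂ))

/-!
Comparing coefficients, `F·F = ∑ Gₙ aₙ Xⁿ` says `Gₙ aₙ = ∑ₖ aₖ aₙ₋ₖ`. The case `n = 1` forces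
`a₀ = 1` (as `a₁ ≠ 0`), so for `n ≥ 2` the two extreme terms of the convolution contribute `2aₙ`
and the others involve only lower coefficients. By strong induction these are `a₁ᵏ/[k]_q!`, which
turns the recurrence into `(Gₙ - 2) aₙ = (Gₙ - 2) a₁ⁿ/[n]_q!`; and `Gₙ > 2` for `n ≥ 2`, since it
is `2` plus a nonempty sum of positive terms.

Nothing here is specific to `q`-factorials: it works for any sequence `c` of nonzero
"factorials" with `c 0 = c 1 = 1` whose binomial sums `∑ₖ cₙ/(cₖ cₙ₋ₖ)` avoid `2` for `n ≥ 2`.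
-/

open Finset

section BinomialSum

variable {K : Type*} [Field K]

noncomputable def binomialSum (c : ℕ → K) (n : ℕ) : K :=
  ∑ k ∈ range (n + 1), c n / (c k * c (n - k))

variable {c : ℕ → K}

theorem binomialSum_one (hc0 : c 0 = 1) (hc1 : c 1 ≠ 0) : binomialSum c 1 = 2 := by
  norm_num [binomialSum, sum_range_succ, hc0, hc1]

theorem binomialSum_add_two (hc0 : c 0 = 1) (m : ℕ) (hc : c (m + 2) ≠ 0) :
    binomialSum c (m + 2) =
      2 + ∑ k ∈ range (m + 1), c (m + 2) / (c (k + 1) * c (m + 2 - (k + 1))) := by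
  rw [binomialSum, sum_range_succ, sum_range_succ']
  simp only [Nat.sub_zero, Nat.sub_self, hc0, one_mul, mul_one, div_self hc]
  ring

theorem two_lt_binomialSum_add_two {c : ℕ → ℝ} (hc0 : c 0 = 1) (hc : ∀ n, 0 < c n) (m : ℕ) :
    2 < binomialSum c (m + 2) := by
  have hmiddle_pos : 0 < ∑ k ∈ range (m + 1), c (m + 2) / (c (k + 1) * c (m + 2 - (k + 1))) :=
    sum_pos (fun k _ => div_pos (hc _) (mul_pos (hc _) (hc _))) nonempty_range_add_one
  rw [binomialSum_add_two hc0 m (hc _).ne']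
  linarith

theorem pow_div_mul_pow_div (x : K) {i j : ℕ} (hi : c i ≠ 0) (hj : c j ≠ 0) (hij : c (i + j) ≠ 0) :
    x ^ i / c i * (x ^ j / c j) = c (i + j) / (c i * c j) * (x ^ (i + j) / c (i + j)) := by
  rw [pow_add]
  field_simp

theorem coeff_eq_pow_div_of_mk_binomialSum_mul_eq_mul_self [CharZero K] {F : K⟦X⟧}
    (hc0 : c 0 = 1) (hc1 : c 1 = 1) (hc : ∀ n, c n ≠ 0) (hB : ∀ m, binomialSum c (m + 2) ≠ 2)
    (h1 : coeff 1 F ≠ 0) (h : mk (fun n => binomialSum c n * coeff n F) = F * F) (n : ℕ) :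
    coeff n F = coeff 1 F ^ n / c n := by
  have hrec (n : ℕ) :
      binomialSum c n * coeff n F = ∑ k ∈ range (n + 1), coeff k F * coeff (n - k) F := by
    simpa [coeff_mul, Nat.sum_antidiagonal_eq_sum_range_succ_mk] using congrArg (coeff n) h
  have ha0 : coeff 0 F = 1 := by
    have h1rec := hrec 1
    rw [binomialSum_one hc0 (hc 1)] at h1rec
    simp only [sum_range_succ, sum_range_zero] at h1rec
    have : (coeff 0 F - 1) * coeff 1 F = 0 := by linear_combination (-1 / 2 : K) * h1rec
    simpa [sub_eq_zero, h1] using this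
  induction n using Nat.strong_induction_on with
  | _ n ih =>
  match n with
  | 0 => simp [ha0, hc0]
  | 1 => simp [hc1]
  | m + 2 =>
    have hinner : ∑ k ∈ range (m + 1), coeff (k + 1) F * coeff (m + 2 - (k + 1)) F =
        (binomialSum c (m + 2) - 2) * (coeff 1 F ^ (m + 2) / c (m + 2)) := by
      rw [binomialSum_add_two hc0 m (hc _), add_sub_cancel_left, sum_mul]
      refine sum_congr rfl fun k hk => ?_
      rw [mem_range] at hk
      rw [ih (k + 1) (by omega), ih (m + 2 - (k + 1)) (by omega)]
      generalize hj : m + 2 - (k + 1) = j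
      rw [show m + 2 = k + 1 + j by omega]
      exact pow_div_mul_pow_div _ (hc _) (hc _) (hc _)
    have hrec' := hrec (m + 2)
    rw [sum_range_succ, sum_range_succ'] at hrec'
    simp only [hinner, Nat.sub_zero, Nat.sub_self, ha0] at hrec'
    apply mul_left_cancel₀ (sub_ne_zero.mpr (hB m))
    linear_combination hrec'

end BinomialSum

@[simp]
theorem qFactorial_zero (q : ℕ) : qFactorial q 0 = 1 := rfl

@[simp]
theorem qFactorial_one (q : ℕ) : qFactorial q 1 = 1 := by
  simp [qFactorial]

theorem qFactorial_pos (q n : ℕ) : 0 < qFactorial q n :=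
  prod_pos fun i _ => by rw [sum_range_succ']; simp

theorem galoisNumber_eq_binomialSum (q : ℕ) :
    galoisNumber q = binomialSum fun n => (qFactorial q n : ℂ) := rfl

theorem galoisNumber_eq_ofReal (q n : ℕ) :
    galoisNumber q n = ((binomialSum (fun n => (qFactorial q n : ℝ)) n : ℝ) : ℂ) := by
  simp [galoisNumber_eq_binomialSum, binomialSum]

theorem galoisNumber_add_two_ne_two (q m : ℕ) : galoisNumber q (m + 2) ≠ 2 := by
  rw [galoisNumber_eq_ofReal]
  have := two_lt_binomialSum_add_two (c := fun n => (qFactorial q n : ℝ)) (by simp)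
    (fun n => by exact_mod_cast qFactorial_pos q n) m
  exact_mod_cast this.ne'

theorem stmt_12_general (q : ℕ)
    (F : PowerSeries ℂ) (h1 : PowerSeries.coeff 1 F ≠ 0)
    (h : (PowerSeries.mk fun n => galoisNumber q n * PowerSeries.coeff n F) = F * F) :
    ∀ n : ℕ, PowerSeries.coeff n F
      = (PowerSeries.coeff 1 F) ^ n / (qFactorial q n : ℂ) := by
  have hB (m : ℕ) : binomialSum (fun n => (qFactorial q n : ℂ)) (m + 2) ≠ 2 := by
    rw [← galoisNumber_eq_binomialSum]
    exact galoisNumber_add_two_ne_two q m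
  rw [galoisNumber_eq_binomialSum] at h
  exact coeff_eq_pow_div_of_mk_binomialSum_mul_eq_mul_self (by simp) (by simp)
    (fun n => by exact_mod_cast (qFactorial_pos q n).ne') hB h1 h

/-- Carlitz implication (5) ⟹ (1) of Theorem 2.3: if `∑ Gₙ(q) aₙ Xⁿ = F·F`
then `aₙ = a₁ⁿ/[n]_q!` for all `n`. -/
theorem stmt_12 (q : ℕ) (hq : IsPrimePow q) (hq2 : 2 ≤ q)
    (F : PowerSeries ℂ) (h1 : PowerSeries.coeff 1 F ≠ 0)
    (h : (PowerSeries.mk fun n => galoisNumber q n * PowerSeries.coeff n F) = F * F) :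
    ∀ n : ℕ, PowerSeries.coeff n F
      = (PowerSeries.coeff 1 F) ^ n / (qFactorial q n : ℂ) :=
  stmt_12_general q F h1 h
end
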